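/- arXiv:1506.02579 — 2 statements merged into one kernel-verified Lean document; each statement's English description precedes it below -/
import Mathlib

section
/- Let $n \geq 3$, $\beta > 0$, $\gamma > 1$ with $\beta\gamma < n$, and let $\theta$ satisfy $\beta\gamma < \theta < n$. Define $v(y) = (1+|y|^2)^{-\theta/2}$. Then for all $x$ with $|x| \geq 2$, $c |x|^{-\frac{\theta - \beta\gamma}{\gamma-1}} \leq \int_0^{|x|/2} \left( \frac{\int_{B_t(x)} v(y)\,dy}{t^{n-\beta\gamma}} \right)^{\frac{1}{\gamma-1}} \frac{dt}{t} \leq C |x|^{-\frac{\theta - \beta\gamma}{\gamma-1}}$ for positive constants $c, C$ depending only on $n, \beta, \gamma, \theta$. -/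
open MeasureTheory Metric

lemma aux_lint12 (a R : ℝ) (ha : 0 < a) (hR : 0 < R) :
    ∫⁻ t in Set.Ioc (0 : ℝ) R, ENNReal.ofReal (t ^ (a - 1)) = ENNReal.ofReal (R ^ a / a) := by
  have hint : IntegrableOn (fun t : ℝ => t ^ (a - 1)) (Set.Ioc 0 R) := by
    have := intervalIntegral.intervalIntegrable_rpow' (a := 0) (b := R)
      (show (-1 : ℝ) < a - 1 by linarith)
    rwa [intervalIntegrable_iff, Set.uIoc_of_le hR.le] at this
  rw [← ofReal_integral_eq_lintegral_ofReal hint]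
  · congr 1
    rw [← intervalIntegral.integral_of_le hR.le,
      integral_rpow (Or.inl (show (-1 : ℝ) < a - 1 by linarith))]
    have h1 : a - 1 + 1 = a := by ring
    rw [h1, Real.zero_rpow ha.ne', sub_zero]
  · filter_upwards [ae_restrict_mem measurableSet_Ioc] with t ht
    exact Real.rpow_nonneg ht.1.le _

set_option maxHeartbeats 1000000 in
theorem stmt12 (n : ℕ) (hn : 3 ≤ n) (β γ θ : ℝ) (hβ : 0 < β) (hγ : 1 < γ)
    (hβγ : β * γ < n) (hθ1 : β * γ < θ) (hθ2 : θ < n) :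
    ∃ c C : ℝ, 0 < c ∧ 0 < C ∧ ∀ x : EuclideanSpace ℝ (Fin n), 2 ≤ ‖x‖ →
      ENNReal.ofReal (c * ‖x‖ ^ (-(θ - β * γ) / (γ - 1)))
          ≤ (∫⁻ t in Set.Ioc (0 : ℝ) (‖x‖ / 2),
              ENNReal.ofReal
                (((∫ y in ball x t, (1 + ‖y‖ ^ 2) ^ (-θ / 2))
                    / t ^ ((n : ℝ) - β * γ)) ^ (1 / (γ - 1)) / t)) ∧
        (∫⁻ t in Set.Ioc (0 : ℝ) (‖x‖ / 2),
            ENNReal.ofReal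
              (((∫ y in ball x t, (1 + ‖y‖ ^ 2) ^ (-θ / 2))
                  / t ^ ((n : ℝ) - β * γ)) ^ (1 / (γ - 1)) / t))
          ≤ ENNReal.ofReal (C * ‖x‖ ^ (-(θ - β * γ) / (γ - 1))) := by
  have hγ1 : (0 : ℝ) < γ - 1 := by linarith
  set p : ℝ := 1 / (γ - 1) with hp_def
  have hp : 0 < p := by positivity
  set a : ℝ := β * γ * p with ha_def
  have hbγpos : 0 < β * γ := by nlinarith
  have ha : 0 < a := mul_pos hbγpos hp
  have hθpos : 0 < θ := lt_trans hbγpos hθ1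
  haveI : NeZero n := ⟨by omega⟩
  set Vol : ℝ := (volume (ball (0 : EuclideanSpace ℝ (Fin n)) 1)).toReal with hVol_def
  have hVol : 0 < Vol :=
    ENNReal.toReal_pos (measure_ball_pos _ _ one_pos).ne' measure_ball_lt_top.ne
  -- main real identity for constants
  have hconst : ∀ s w : ℝ, 0 < s → 0 < w →
      ((w * s ^ (-θ)) * Vol) ^ p * ((s / 2) ^ a / a)
        = (w * Vol) ^ p * 2 ^ (-a) / a * s ^ (-(θ - β * γ) / (γ - 1)) := by
    intro s w hs hw
    have e1 : ((w * s ^ (-θ)) * Vol) ^ p = (w * Vol) ^ p * s ^ (-θ * p) := by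
      rw [show w * s ^ (-θ) * Vol = (w * Vol) * s ^ (-θ) by ring,
        Real.mul_rpow (by positivity) (Real.rpow_nonneg hs.le _), ← Real.rpow_mul hs.le]
    have e2 : (s / 2) ^ a = s ^ a * 2 ^ (-a) := by
      rw [Real.div_rpow hs.le (by norm_num), Real.rpow_neg (by norm_num), div_eq_mul_inv]
    have e3 : s ^ (-θ * p) * s ^ a = s ^ (-(θ - β * γ) / (γ - 1)) := by
      rw [← Real.rpow_add hs]
      congr 1
      rw [ha_def, hp_def]
      field_simp
      ring
    calc ((w * s ^ (-θ)) * Vol) ^ p * ((s / 2) ^ a / a)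
        = ((w * Vol) ^ p * s ^ (-θ * p)) * ((s ^ a * 2 ^ (-a)) / a) := by rw [e1, e2]
      _ = (w * Vol) ^ p * 2 ^ (-a) / a * (s ^ (-θ * p) * s ^ a) := by ring
      _ = _ := by rw [e3]
  refine ⟨((2 : ℝ) ^ (-θ) * Vol) ^ p * 2 ^ (-a) / a,
    ((2 : ℝ) ^ θ * Vol) ^ p * 2 ^ (-a) / a, ?_, ?_, ?_⟩
  · have h1 : (0 : ℝ) < (2 : ℝ) ^ (-θ) * Vol := mul_pos (Real.rpow_pos_of_pos two_pos _) hVol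
    exact div_pos (mul_pos (Real.rpow_pos_of_pos h1 _) (Real.rpow_pos_of_pos two_pos _)) ha
  · have h1 : (0 : ℝ) < (2 : ℝ) ^ θ * Vol := mul_pos (Real.rpow_pos_of_pos two_pos _) hVol
    exact div_pos (mul_pos (Real.rpow_pos_of_pos h1 _) (Real.rpow_pos_of_pos two_pos _)) ha
  intro x hx
  have hxpos : (0 : ℝ) < ‖x‖ := by linarith
  set R : ℝ := ‖x‖ / 2 with hR_def
  have hRpos : 0 < R := by positivity
  have sq_rpow : ∀ b : ℝ, 0 < b → ((b ^ 2 : ℝ)) ^ (-θ / 2) = b ^ (-θ) := by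
    intro b hb
    rw [← Real.rpow_natCast b 2, ← Real.rpow_mul hb.le]
    congr 1
    push_cast
    ring
  have hball : ∀ t : ℝ, 0 ≤ t → (volume (ball x t)).toReal = t ^ n * Vol := by
    intro t ht
    rw [Measure.addHaar_ball volume x ht, finrank_euclideanSpace_fin, ENNReal.toReal_mul,
      ENNReal.toReal_ofReal (by positivity)]
  -- sandwich for the ball integral
  have hIv : ∀ t ∈ Set.Ioc (0 : ℝ) R,
      (2 * ‖x‖) ^ (-θ) * (t ^ n * Vol) ≤ (∫ y in ball x t, (1 + ‖y‖ ^ 2) ^ (-θ / 2)) ∧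
      (∫ y in ball x t, (1 + ‖y‖ ^ 2) ^ (-θ / 2)) ≤ (‖x‖ / 2) ^ (-θ) * (t ^ n * Vol) := by
    intro t ht
    have ht0 : 0 < t := ht.1
    have hcont : Continuous fun y : EuclideanSpace ℝ (Fin n) => (1 + ‖y‖ ^ 2) ^ (-θ / 2) :=
      (continuous_const.add ((continuous_norm).pow 2)).rpow_const fun y =>
        Or.inl (show (1 : ℝ) + ‖y‖ ^ 2 ≠ 0 by positivity)
    have hint : IntegrableOn (fun y : EuclideanSpace ℝ (Fin n) => (1 + ‖y‖ ^ 2) ^ (-θ / 2))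
        (ball x t) :=
      (hcont.continuousOn.integrableOn_compact (isCompact_closedBall x t)).mono_set
        ball_subset_closedBall
    have hyb : ∀ y ∈ ball x t, ‖x‖ / 2 ≤ ‖y‖ ∧ ‖y‖ ≤ 3 * ‖x‖ / 2 := by
      intro y hy
      have hd : dist y x < t := mem_ball.mp hy
      have h1 : ‖y‖ - ‖x‖ ≤ dist y x := by
        have := norm_sub_norm_le y x
        rwa [dist_eq_norm]
      have h2 : ‖x‖ - ‖y‖ ≤ dist y x := by
        rw [dist_comm, dist_eq_norm]
        exact norm_sub_norm_le x y
      constructor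
      · have : t ≤ ‖x‖ / 2 := ht.2
        linarith
      · have : t ≤ ‖x‖ / 2 := ht.2
        linarith
    have hlow : ∀ y ∈ ball x t, (2 * ‖x‖) ^ (-θ) ≤ (1 + ‖y‖ ^ 2) ^ (-θ / 2) := by
      intro y hy
      have hb := (hyb y hy).2
      have h2 : 1 + ‖y‖ ^ 2 ≤ (2 * ‖x‖) ^ 2 := by nlinarith [norm_nonneg y]
      calc (2 * ‖x‖) ^ (-θ) = (((2 * ‖x‖) ^ 2 : ℝ)) ^ (-θ / 2) := (sq_rpow _ (by positivity)).symm
        _ ≤ (1 + ‖y‖ ^ 2) ^ (-θ / 2) :=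
          Real.rpow_le_rpow_of_nonpos (by positivity) h2 (by linarith)
    have hup : ∀ y ∈ ball x t, (1 + ‖y‖ ^ 2) ^ (-θ / 2) ≤ (‖x‖ / 2) ^ (-θ) := by
      intro y hy
      have hb := (hyb y hy).1
      have h2 : ((‖x‖ / 2) ^ 2 : ℝ) ≤ 1 + ‖y‖ ^ 2 := by nlinarith [norm_nonneg y]
      calc (1 + ‖y‖ ^ 2) ^ (-θ / 2) ≤ (((‖x‖ / 2) ^ 2 : ℝ)) ^ (-θ / 2) :=
            Real.rpow_le_rpow_of_nonpos (by positivity) h2 (by linarith)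
        _ = (‖x‖ / 2) ^ (-θ) := sq_rpow _ (by positivity)
    constructor
    · calc (2 * ‖x‖) ^ (-θ) * (t ^ n * Vol)
          = ∫ _ in ball x t, (2 * ‖x‖) ^ (-θ) := by
            rw [setIntegral_const, measureReal_def, hball t ht0.le, smul_eq_mul]; ring
        _ ≤ ∫ y in ball x t, (1 + ‖y‖ ^ 2) ^ (-θ / 2) :=
            setIntegral_mono_on (integrableOn_const measure_ball_lt_top.ne) hint
              measurableSet_ball hlow
    · calc (∫ y in ball x t, (1 + ‖y‖ ^ 2) ^ (-θ / 2))
          ≤ ∫ _ in ball x t, (‖x‖ / 2) ^ (-θ) :=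
            setIntegral_mono_on hint (integrableOn_const measure_ball_lt_top.ne)
              measurableSet_ball hup
        _ = (‖x‖ / 2) ^ (-θ) * (t ^ n * Vol) := by
            rw [setIntegral_const, measureReal_def, hball t ht0.le, smul_eq_mul]; ring
  -- simplification of the model integrand
  have hsimp : ∀ t : ℝ, 0 < t → ∀ K : ℝ, 0 ≤ K →
      ((K * (t ^ n * Vol)) / t ^ ((n : ℝ) - β * γ)) ^ p / t = (K * Vol) ^ p * t ^ (a - 1) := by
    intro t ht0 K hK
    have e0 : t ^ (β * γ) = t ^ ((n : ℝ)) / t ^ ((n : ℝ) - β * γ) := by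
      rw [← Real.rpow_sub ht0]; ring_nf
    have e1 : (K * (t ^ n * Vol)) / t ^ ((n : ℝ) - β * γ) = (K * Vol) * t ^ (β * γ) := by
      rw [e0, ← Real.rpow_natCast t n]; ring
    have e2 : ((K * Vol) * t ^ (β * γ)) ^ p = (K * Vol) ^ p * t ^ a := by
      rw [Real.mul_rpow (by positivity) (Real.rpow_nonneg ht0.le _), ← Real.rpow_mul ht0.le]
    have e3 : t ^ a / t = t ^ (a - 1) := by
      rw [Real.rpow_sub ht0, Real.rpow_one]
    rw [e1, e2, mul_div_assoc, e3]
  -- pointwise sandwich of the full integrand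
  have key : ∀ t ∈ Set.Ioc (0 : ℝ) R,
      ((2 * ‖x‖) ^ (-θ) * Vol) ^ p * t ^ (a - 1)
        ≤ ((∫ y in ball x t, (1 + ‖y‖ ^ 2) ^ (-θ / 2)) / t ^ ((n : ℝ) - β * γ)) ^ p / t ∧
      ((∫ y in ball x t, (1 + ‖y‖ ^ 2) ^ (-θ / 2)) / t ^ ((n : ℝ) - β * γ)) ^ p / t
        ≤ ((‖x‖ / 2) ^ (-θ) * Vol) ^ p * t ^ (a - 1) := by
    intro t ht
    have ht0 : 0 < t := ht.1
    obtain ⟨hl, hu⟩ := hIv t ht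
    have htp : (0 : ℝ) < t ^ ((n : ℝ) - β * γ) := Real.rpow_pos_of_pos ht0 _
    have hI0 : (0 : ℝ) ≤ ∫ y in ball x t, (1 + ‖y‖ ^ 2) ^ (-θ / 2) :=
      le_trans (by positivity) hl
    constructor
    · rw [← hsimp t ht0 _ (by positivity)]
      have m1 := (div_le_div_iff_of_pos_right htp).mpr hl
      have m2 := Real.rpow_le_rpow (by positivity) m1 hp.le
      exact (div_le_div_iff_of_pos_right ht0).mpr m2
    · rw [← hsimp t ht0 _ (by positivity)]
      have m1 := (div_le_div_iff_of_pos_right htp).mpr hu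
      have m2 := Real.rpow_le_rpow (div_nonneg hI0 htp.le) m1 hp.le
      exact (div_le_div_iff_of_pos_right ht0).mpr m2
  set Kl : ℝ := ((2 * ‖x‖) ^ (-θ) * Vol) ^ p with hKl_def
  set Ku : ℝ := ((‖x‖ / 2) ^ (-θ) * Vol) ^ p with hKu_def
  have hKl0 : 0 ≤ Kl := Real.rpow_nonneg (by positivity) _
  have hKu0 : 0 ≤ Ku := Real.rpow_nonneg (by positivity) _
  have hlint : ∀ K : ℝ, 0 ≤ K →
      (∫⁻ t in Set.Ioc (0 : ℝ) R, ENNReal.ofReal (K * t ^ (a - 1)))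
        = ENNReal.ofReal (K * (R ^ a / a)) := by
    intro K hK
    calc (∫⁻ t in Set.Ioc (0 : ℝ) R, ENNReal.ofReal (K * t ^ (a - 1)))
        = ∫⁻ t in Set.Ioc (0 : ℝ) R, ENNReal.ofReal K * ENNReal.ofReal (t ^ (a - 1)) := by
          apply lintegral_congr
          intro t
          rw [ENNReal.ofReal_mul hK]
      _ = ENNReal.ofReal K * ∫⁻ t in Set.Ioc (0 : ℝ) R, ENNReal.ofReal (t ^ (a - 1)) :=
          lintegral_const_mul' _ _ ENNReal.ofReal_ne_top
      _ = ENNReal.ofReal K * ENNReal.ofReal (R ^ a / a) := by rw [aux_lint12 a R ha hRpos]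
      _ = _ := (ENNReal.ofReal_mul hK).symm
  constructor
  · have heq : ((2 : ℝ) ^ (-θ) * Vol) ^ p * 2 ^ (-a) / a * ‖x‖ ^ (-(θ - β * γ) / (γ - 1))
        = Kl * (R ^ a / a) := by
      have h2θ : (0 : ℝ) < (2 : ℝ) ^ (-θ) := Real.rpow_pos_of_pos two_pos _
      have := hconst ‖x‖ ((2 : ℝ) ^ (-θ)) hxpos h2θ
      rw [hKl_def, hR_def, Real.mul_rpow (by norm_num) hxpos.le, ← this]
    calc ENNReal.ofReal (((2 : ℝ) ^ (-θ) * Vol) ^ p * 2 ^ (-a) / a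
            * ‖x‖ ^ (-(θ - β * γ) / (γ - 1)))
        = ENNReal.ofReal (Kl * (R ^ a / a)) := by rw [heq]
      _ = ∫⁻ t in Set.Ioc (0 : ℝ) R, ENNReal.ofReal (Kl * t ^ (a - 1)) := (hlint Kl hKl0).symm
      _ ≤ _ := by
          refine lintegral_mono_ae ?_
          filter_upwards [ae_restrict_mem measurableSet_Ioc] with t ht
          exact ENNReal.ofReal_le_ofReal (key t ht).1
  · have heq : ((2 : ℝ) ^ θ * Vol) ^ p * 2 ^ (-a) / a * ‖x‖ ^ (-(θ - β * γ) / (γ - 1))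
        = Ku * (R ^ a / a) := by
      have h2θ : (0 : ℝ) < (2 : ℝ) ^ θ := Real.rpow_pos_of_pos two_pos _
      have e : (‖x‖ / 2) ^ (-θ) = (2 : ℝ) ^ θ * ‖x‖ ^ (-θ) := by
        rw [Real.div_rpow hxpos.le (by norm_num),
          Real.rpow_neg (by norm_num : (0 : ℝ) ≤ 2) θ]
        field_simp
      have := hconst ‖x‖ ((2 : ℝ) ^ θ) hxpos h2θ
      rw [hKu_def, hR_def, e, ← this]
    calc (∫⁻ t in Set.Ioc (0 : ℝ) R,
            ENNReal.ofReal
              (((∫ y in ball x t, (1 + ‖y‖ ^ 2) ^ (-θ / 2))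
                  / t ^ ((n : ℝ) - β * γ)) ^ (1 / (γ - 1)) / t))
        ≤ ∫⁻ t in Set.Ioc (0 : ℝ) R, ENNReal.ofReal (Ku * t ^ (a - 1)) := by
          refine lintegral_mono_ae ?_
          filter_upwards [ae_restrict_mem measurableSet_Ioc] with t ht
          exact ENNReal.ofReal_le_ofReal (key t ht).2
      _ = ENNReal.ofReal (Ku * (R ^ a / a)) := hlint Ku hKu0
      _ = ENNReal.ofReal (((2 : ℝ) ^ θ * Vol) ^ p * 2 ^ (-a) / a
            * ‖x‖ ^ (-(θ - β * γ) / (γ - 1))) := by rw [heq]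
end

section
/- Let $n \geq 3$, $\beta > 0$, $\gamma > 1$ with $\beta\gamma < n$, and suppose $p\frac{n-\beta\gamma}{\gamma-1} - \sigma_2 = n$. Let $u : \mathbb{R}^n \to [0,\infty)$ be measurable with $u(y) \leq C_0 |y|^{-\frac{n-\beta\gamma}{\gamma-1}}$ for $|y| \geq 1$ and $|y|^{\sigma_2} u^p \in L^1(B_1(0))$. Then for $\lambda \in (1/2, 1)$ and $|x|$ sufficiently large, $\int_0^{\lambda|x|} \left( \frac{\int_{B_t(x)} |y|^{\sigma_2} u(y)^p \, dy}{t^{n-\beta\gamma}} \right)^{\frac{1}{\gamma-1}} \frac{dt}{t} \leq C |x|^{-\frac{n-\beta\gamma}{\gamma-1}}$, and in particular this quantity is $o\left(|x|^{-\frac{n-\beta\gamma}{\gamma-1}} (\ln|x|)^{\frac{1}{\gamma-1}}\right)$ as $|x| \to \infty$. -/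
/-!
For `t ≤ λ|x|` every `y ∈ B_t(x)` has `|y| ≥ (1 - λ)|x| ≥ 1` once `|x|` is large, so the ball stays
away from the origin. There the decay of `u` and the critical relation
`p (n - βγ)/(γ - 1) - σ₂ = n` give `|y|^σ₂ u(y)^p ≤ C₀^p |y|^{-n} ≲ |x|^{-n}`, hence
`∫_{B_t(x)} |y|^σ₂ u^p ≲ |x|^{-n} t^n` and the `t`-integrand is `≲ |x|^{-n/(γ-1)} t^{βγ/(γ-1) - 1}`.
Integrating up to `λ|x|` gives `|x|^{-(n - βγ)/(γ-1)}`, and the logarithmic bound follows because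
`(log|x|)^{1/(γ-1)} → ∞`.
-/

open MeasureTheory Metric Filter Module

lemma one_sub_mul_norm_le_norm_of_mem_ball {E : Type*} [SeminormedAddCommGroup E] {x y : E}
    {t lam : ℝ} (hy : y ∈ ball x t) (ht : t ≤ lam * ‖x‖) : (1 - lam) * ‖x‖ ≤ ‖y‖ := by
  have := norm_sub_norm_le x y
  rw [mem_ball, dist_eq_norm, norm_sub_rev] at hy
  linarith

lemma rpow_mul_rpow_le_of_le_mul_rpow_neg {r v C₀ α σ p : ℝ} (hr : 0 < r) (hv : 0 ≤ v)
    (hC₀ : 0 ≤ C₀) (hp : 0 ≤ p) (hvr : v ≤ C₀ * r ^ (-α)) :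
    r ^ σ * v ^ p ≤ C₀ ^ p * r ^ (σ - p * α) := by
  calc r ^ σ * v ^ p ≤ r ^ σ * (C₀ * r ^ (-α)) ^ p := by gcongr
    _ = C₀ ^ p * r ^ (σ - p * α) := by
      rw [Real.mul_rpow hC₀ (Real.rpow_nonneg hr.le _), ← Real.rpow_mul hr.le, sub_eq_add_neg,
        Real.rpow_add hr]
      ring_nf

lemma rpow_div_rpow_div_le {I K t d s q : ℝ} (hI : 0 ≤ I) (hK : 0 ≤ K) (ht : 0 < t)
    (hq : 0 ≤ q) (hIK : I ≤ K * t ^ d) : (I / t ^ (d - s)) ^ q / t ≤ K ^ q * t ^ (s * q - 1) := by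
  have hdiv : I / t ^ (d - s) ≤ K * t ^ s := by
    rw [div_le_iff₀ (Real.rpow_pos_of_pos ht _), mul_assoc, ← Real.rpow_add ht]
    simpa using hIK
  calc (I / t ^ (d - s)) ^ q / t ≤ (K * t ^ s) ^ q / t := by gcongr
    _ = K ^ q * t ^ (s * q - 1) := by
      rw [Real.mul_rpow hK (Real.rpow_nonneg ht.le _), ← Real.rpow_mul ht.le,
        Real.rpow_sub_one ht.ne', mul_div_assoc]

lemma lintegral_Ioc_ofReal_le_of_le_mul_rpow {g : ℝ → ℝ} {M δ T : ℝ} (hM : 0 ≤ M) (hδ : 0 < δ)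
    (hT : 0 ≤ T) (hg : ∀ t ∈ Set.Ioc 0 T, g t ≤ M * t ^ (δ - 1)) :
    ∫⁻ t in Set.Ioc 0 T, ENNReal.ofReal (g t) ≤ ENNReal.ofReal (M * (T ^ δ / δ)) := by
  have hint : IntegrableOn (fun t : ℝ => M * t ^ (δ - 1)) (Set.Ioc 0 T) := by
    have := intervalIntegral.intervalIntegrable_rpow' (a := 0) (b := T) (by linarith : -1 < δ - 1)
    exact ((intervalIntegrable_iff_integrableOn_Ioc_of_le hT).1 this).const_mul M
  have hnonneg : 0 ≤ᵐ[volume.restrict (Set.Ioc 0 T)] fun t : ℝ => M * t ^ (δ - 1) := by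
    filter_upwards [ae_restrict_mem measurableSet_Ioc] with t ht
    exact mul_nonneg hM (Real.rpow_nonneg ht.1.le _)
  have hval : ∫ t in Set.Ioc 0 T, M * t ^ (δ - 1) = M * (T ^ δ / δ) := by
    rw [← intervalIntegral.integral_of_le hT, intervalIntegral.integral_const_mul,
      integral_rpow (Or.inl (by linarith)), sub_add_cancel, Real.zero_rpow hδ.ne', sub_zero]
  calc ∫⁻ t in Set.Ioc 0 T, ENNReal.ofReal (g t)
      ≤ ∫⁻ t in Set.Ioc 0 T, ENNReal.ofReal (M * t ^ (δ - 1)) :=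
        setLIntegral_mono (by fun_prop) fun t ht => ENNReal.ofReal_le_ofReal (hg t ht)
    _ = ENNReal.ofReal (M * (T ^ δ / δ)) := by
        rw [← ofReal_integral_eq_lintegral_ofReal hint hnonneg, hval]

lemma exists_forall_le_mul_log_rpow (C : ℝ) {ε q : ℝ} (hε : 0 < ε) (hq : 0 < q) :
    ∃ R, ∀ r, R ≤ r → C ≤ ε * Real.log r ^ q :=
  eventually_atTop.1 <|
    (((tendsto_rpow_atTop hq).comp Real.tendsto_log_atTop).const_mul_atTop hε).eventually_ge_atTop C

section NearField

variable {E : Type*} [NormedAddCommGroup E] [NormedSpace ℝ E] [MeasurableSpace E] [BorelSpace E]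
  [FiniteDimensional ℝ E] (μ : Measure E) [μ.IsAddHaarMeasure]

lemma setIntegral_ball_le_of_norm_le {f : E → ℝ} {x : E} {t M : ℝ} (ht : 0 < t)
    (hf : ∀ y ∈ ball x t, ‖f y‖ ≤ M) :
    ∫ y in ball x t, f y ∂μ ≤ M * μ.real (ball 0 1) * t ^ finrank ℝ E := by
  have hvol : μ.real (ball x t) = t ^ finrank ℝ E * μ.real (ball 0 1) := by
    rw [measureReal_def, Measure.addHaar_ball_of_pos μ x ht, ENNReal.toReal_mul,
      ENNReal.toReal_ofReal (by positivity), measureReal_def]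
  calc ∫ y in ball x t, f y ∂μ ≤ ‖∫ y in ball x t, f y ∂μ‖ := Real.le_norm_self _
    _ ≤ M * μ.real (ball x t) := norm_setIntegral_le_of_norm_le_const measure_ball_lt_top hf
    _ = M * μ.real (ball 0 1) * t ^ finrank ℝ E := by rw [hvol]; ring

variable {n : ℕ} (hn : finrank ℝ E = n) {u : E → ℝ} {C₀ α σ p lam : ℝ}
  (hnn : ∀ y, 0 ≤ u y) (hdecay : ∀ y : E, 1 ≤ ‖y‖ → u y ≤ C₀ * ‖y‖ ^ (-α)) (hp : 0 ≤ p)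
  (hcrit : p * α - σ = n)
include hn hnn hdecay hp hcrit

lemma setIntegral_ball_rpow_mul_rpow_le {x : E} {t : ℝ} (hx : 1 ≤ (1 - lam) * ‖x‖) (ht : 0 < t)
    (htx : t ≤ lam * ‖x‖) :
    ∫ y in ball x t, ‖y‖ ^ σ * u y ^ p ∂μ
      ≤ C₀ ^ p * ((1 - lam) * ‖x‖) ^ (-(n : ℝ)) * μ.real (ball 0 1) * t ^ (n : ℝ) := by
  rw [Real.rpow_natCast, ← hn]
  refine setIntegral_ball_le_of_norm_le μ ht fun y hy => ?_
  have hxy := one_sub_mul_norm_le_norm_of_mem_ball hy htx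
  have hy1 : 1 ≤ ‖y‖ := hx.trans hxy
  have hy0 : 0 < ‖y‖ := one_pos.trans_le hy1
  have hC₀ : 0 ≤ C₀ :=
    nonneg_of_mul_nonneg_left ((hnn y).trans (hdecay y hy1)) (Real.rpow_pos_of_pos hy0 _)
  have hbound := rpow_mul_rpow_le_of_le_mul_rpow_neg (σ := σ) hy0 (hnn y) hC₀ hp (hdecay y hy1)
  rw [show σ - p * α = -(n : ℝ) by linarith] at hbound
  rw [Real.norm_of_nonneg (by have := hnn y; positivity), hn]
  refine hbound.trans (mul_le_mul_of_nonneg_left ?_ (by positivity))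
  exact Real.rpow_le_rpow_of_nonpos (by linarith) hxy (by simp)

lemma exists_near_field_lintegral_le (hC₀ : 0 < C₀) {s q : ℝ} (hs : 0 < s) (hq : 0 < q)
    (hlam₀ : 0 < lam) (hlam₁ : lam < 1) :
    ∃ C, 0 < C ∧ ∀ x : E, 1 ≤ (1 - lam) * ‖x‖ →
      ∫⁻ t in Set.Ioc 0 (lam * ‖x‖),
          ENNReal.ofReal (((∫ y in ball x t, ‖y‖ ^ σ * u y ^ p ∂μ) / t ^ ((n : ℝ) - s)) ^ q / t)
        ≤ ENNReal.ofReal (C * ‖x‖ ^ (-((n : ℝ) - s) * q)) := by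
  set A := C₀ ^ p * (1 - lam) ^ (-(n : ℝ)) * μ.real (ball 0 1)
  refine ⟨A ^ q * (lam ^ (s * q) / (s * q)), ?_, fun x hx => ?_⟩
  · have : 0 < μ.real (ball (0 : E) 1) :=
      ENNReal.toReal_pos (measure_ball_pos μ 0 one_pos).ne' measure_ball_lt_top.ne
    have : 0 < 1 - lam := by linarith
    positivity
  have h1lam : 0 < 1 - lam := by linarith
  have hx0 : 0 < ‖x‖ := by nlinarith [norm_nonneg x]
  have hK : C₀ ^ p * ((1 - lam) * ‖x‖) ^ (-(n : ℝ)) * μ.real (ball 0 1)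
      = A * ‖x‖ ^ (-(n : ℝ)) := by
    rw [Real.mul_rpow h1lam.le hx0.le]; ring
  have hA : 0 ≤ A := by positivity
  calc _ ≤ ENNReal.ofReal ((A * ‖x‖ ^ (-(n : ℝ))) ^ q * ((lam * ‖x‖) ^ (s * q) / (s * q))) := by
        refine lintegral_Ioc_ofReal_le_of_le_mul_rpow (by positivity) (by positivity)
          (by positivity) fun t ⟨ht, htx⟩ => rpow_div_rpow_div_le ?_ (by positivity) ht hq.le ?_
        · exact setIntegral_nonneg measurableSet_ball fun y _ => by have := hnn y; positivity
        · rw [← hK]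
          exact setIntegral_ball_rpow_mul_rpow_le μ hn hnn hdecay hp hcrit hx ht htx
    _ = ENNReal.ofReal (A ^ q * (lam ^ (s * q) / (s * q)) * ‖x‖ ^ (-((n : ℝ) - s) * q)) := by
        rw [Real.mul_rpow hA (by positivity), Real.mul_rpow hlam₀.le hx0.le, ← Real.rpow_mul hx0.le,
          show -((n : ℝ) - s) * q = -(n : ℝ) * q + s * q by ring, Real.rpow_add hx0]
        ring_nf

end NearField

theorem stmt16_general (n : ℕ) (β γ p σ₂ C₀ : ℝ) (hβ : 0 < β) (hγ : 1 < γ)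
    (hp : 0 < p) (hC₀ : 0 < C₀)
    (hcrit : p * (((n : ℝ) - β * γ) / (γ - 1)) - σ₂ = n)
    (u : EuclideanSpace ℝ (Fin n) → ℝ) (hnn : ∀ y, 0 ≤ u y)
    (hdecay : ∀ y : EuclideanSpace ℝ (Fin n), 1 ≤ ‖y‖ →
      u y ≤ C₀ * ‖y‖ ^ (-((n : ℝ) - β * γ) / (γ - 1))) :
    ∀ lam : ℝ, 1 / 2 < lam → lam < 1 →
      (∃ C : ℝ, 0 < C ∧ ∃ R : ℝ, 0 < R ∧ ∀ x : EuclideanSpace ℝ (Fin n), R ≤ ‖x‖ →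
        (∫⁻ t in Set.Ioc (0 : ℝ) (lam * ‖x‖),
            ENNReal.ofReal
              (((∫ y in ball x t, ‖y‖ ^ σ₂ * u y ^ p)
                  / t ^ ((n : ℝ) - β * γ)) ^ (1 / (γ - 1)) / t))
          ≤ ENNReal.ofReal (C * ‖x‖ ^ (-((n : ℝ) - β * γ) / (γ - 1)))) ∧
      (∀ ε : ℝ, 0 < ε → ∃ R : ℝ, 0 < R ∧ ∀ x : EuclideanSpace ℝ (Fin n), R ≤ ‖x‖ →
        (∫⁻ t in Set.Ioc (0 : ℝ) (lam * ‖x‖),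
            ENNReal.ofReal
              (((∫ y in ball x t, ‖y‖ ^ σ₂ * u y ^ p)
                  / t ^ ((n : ℝ) - β * γ)) ^ (1 / (γ - 1)) / t))
          ≤ ENNReal.ofReal
              (ε * ‖x‖ ^ (-((n : ℝ) - β * γ) / (γ - 1))
                * (Real.log ‖x‖) ^ (1 / (γ - 1)))) := by
  intro lam hlam₀ hlam₁
  have hq : 0 < 1 / (γ - 1) := one_div_pos.2 (sub_pos.2 hγ)
  obtain ⟨C, hC, hnear⟩ := exists_near_field_lintegral_le (s := β * γ) volume
    finrank_euclideanSpace_fin hnn (fun y hy => (hdecay y hy).trans_eq (by rw [neg_div])) hp.le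
    hcrit hC₀ (by positivity) hq (by linarith) hlam₁
  have h1lam : 0 < 1 - lam := by linarith
  have hbound : ∀ x : EuclideanSpace ℝ (Fin n), 1 / (1 - lam) ≤ ‖x‖ → _ := fun x hx =>
    (hnear x ((div_le_iff₀' h1lam).1 hx)).trans_eq (by rw [mul_one_div])
  refine ⟨⟨C, hC, 1 / (1 - lam), by positivity, hbound⟩, fun ε hε => ?_⟩
  obtain ⟨R, hR⟩ := exists_forall_le_mul_log_rpow C hε hq
  refine ⟨max (1 / (1 - lam)) R, lt_max_of_lt_left (by positivity), fun x hx => ?_⟩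
  refine (hbound x (le_of_max_le_left hx)).trans (ENNReal.ofReal_le_ofReal ?_)
  calc C * ‖x‖ ^ (-((n : ℝ) - β * γ) / (γ - 1))
      ≤ ε * Real.log ‖x‖ ^ (1 / (γ - 1)) * ‖x‖ ^ (-((n : ℝ) - β * γ) / (γ - 1)) :=
        mul_le_mul_of_nonneg_right (hR _ (le_of_max_le_right hx)) (by positivity)
    _ = _ := by ring

theorem stmt16 (n : ℕ) (hn : 3 ≤ n) (β γ p σ₂ C₀ : ℝ) (hβ : 0 < β) (hγ : 1 < γ)
    (hβγ : β * γ < n) (hp : 0 < p) (hC₀ : 0 < C₀)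
    (hcrit : p * (((n : ℝ) - β * γ) / (γ - 1)) - σ₂ = n)
    (u : EuclideanSpace ℝ (Fin n) → ℝ) (hmeas : Measurable u) (hnn : ∀ y, 0 ≤ u y)
    (hdecay : ∀ y : EuclideanSpace ℝ (Fin n), 1 ≤ ‖y‖ →
      u y ≤ C₀ * ‖y‖ ^ (-((n : ℝ) - β * γ) / (γ - 1)))
    (hloc : IntegrableOn (fun y : EuclideanSpace ℝ (Fin n) => ‖y‖ ^ σ₂ * u y ^ p)
      (ball (0 : EuclideanSpace ℝ (Fin n)) 1) volume) :
    ∀ lam : ℝ, 1 / 2 < lam → lam < 1 →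
      (∃ C : ℝ, 0 < C ∧ ∃ R : ℝ, 0 < R ∧ ∀ x : EuclideanSpace ℝ (Fin n), R ≤ ‖x‖ →
        (∫⁻ t in Set.Ioc (0 : ℝ) (lam * ‖x‖),
            ENNReal.ofReal
              (((∫ y in ball x t, ‖y‖ ^ σ₂ * u y ^ p)
                  / t ^ ((n : ℝ) - β * γ)) ^ (1 / (γ - 1)) / t))
          ≤ ENNReal.ofReal (C * ‖x‖ ^ (-((n : ℝ) - β * γ) / (γ - 1)))) ∧
      (∀ ε : ℝ, 0 < ε → ∃ R : ℝ, 0 < R ∧ ∀ x : EuclideanSpace ℝ (Fin n), R ≤ ‖x‖ →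
        (∫⁻ t in Set.Ioc (0 : ℝ) (lam * ‖x‖),
            ENNReal.ofReal
              (((∫ y in ball x t, ‖y‖ ^ σ₂ * u y ^ p)
                  / t ^ ((n : ℝ) - β * γ)) ^ (1 / (γ - 1)) / t))
          ≤ ENNReal.ofReal
              (ε * ‖x‖ ^ (-((n : ℝ) - β * γ) / (γ - 1))
                * (Real.log ‖x‖) ^ (1 / (γ - 1)))) :=
  stmt16_general n β γ p σ₂ C₀ hβ hγ hp hC₀ hcrit u hnn hdecay
end
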